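/- arXiv:2211.08167 — 7 statements merged into one kernel-verified Lean document; each statement's English description precedes it below -/
import Mathlib

section
/- Let n ≥ 2 and let K : ℝⁿ \ {0} → ℝ be continuous, homogeneous of degree 1−n (i.e. K(λx) = λ^{1−n} K(x) for λ > 0), locally α-Hölder continuous on ℝⁿ \ {0} for some α ∈ (0,1), and vanishing on the closed lower halfspace {x : xₙ ≤ 0} \ {0}. Then the function y' ↦ K(y', 1) is integrable on ℝ^{n−1}, with |K(y',1)| ≤ C |(y',1)|^{1−n−α} for |y'| large. -/
open MeasureTheory

lemma holderOnWith_dist_le {X : Type*} [MetricSpace X] {C r : NNReal} {f : X → ℝ}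
    {s : Set X} (h : HolderOnWith C r f s) {x y : X} (hx : x ∈ s) (hy : y ∈ s) :
    dist (f x) (f y) ≤ (C : ℝ) * dist x y ^ (r : ℝ) := by
  have h1 := h.edist_le hx hy
  rw [edist_dist, edist_dist, ENNReal.ofReal_rpow_of_nonneg dist_nonneg r.coe_nonneg,
    ← ENNReal.ofReal_coe_nnreal, ← ENNReal.ofReal_mul (by positivity)] at h1
  exact (ENNReal.ofReal_le_ofReal_iff (by positivity)).mp h1

/-- For `K : ℝⁿ \ {0} → ℝ` (n = m+1 ≥ 2) continuous away from 0,
homogeneous of degree `1 − n`, locally α-Hölder on `ℝⁿ \ {0}` for some `α ∈ (0,1)`,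
vanishing on the closed lower halfspace minus the origin, the function
`y' ↦ K(y', 1)` is integrable on `ℝ^{n−1}`, with the decay bound
`|K(y',1)| ≤ C |(y',1)|^{1−n−α}` for `|y'|` large. -/
theorem stmt_0 (m : ℕ) (hm : 1 ≤ m) (K : (Fin (m + 1) → ℝ) → ℝ) (α : NNReal)
    (hα0 : 0 < α) (hα1 : (α : ℝ) < 1)
    (hcont : ContinuousOn K {x | x ≠ 0})
    (hhom : ∀ l : ℝ, 0 < l → ∀ x : Fin (m + 1) → ℝ, x ≠ 0 →
      K (l • x) = l ^ ((1 : ℝ) - ((m : ℝ) + 1)) * K x)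
    (hholder : ∀ s : Set (Fin (m + 1) → ℝ), IsCompact s → s ⊆ {x | x ≠ 0} →
      ∃ C : NNReal, HolderOnWith C α K s)
    (hvanish : ∀ x : Fin (m + 1) → ℝ, x ≠ 0 → x (Fin.last m) ≤ 0 → K x = 0) :
    Integrable (fun y' : Fin m → ℝ => K (Fin.snoc y' 1)) ∧
    ∃ C R : ℝ, 0 < C ∧ ∀ y' : Fin m → ℝ, R ≤ ‖y'‖ →
      |K (Fin.snoc y' 1)| ≤
        C * ‖(Fin.snoc y' 1 : Fin (m + 1) → ℝ)‖ ^ ((1 : ℝ) - ((m : ℝ) + 1) - (α : ℝ)) := by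
  have hαpos : (0 : ℝ) < (α : ℝ) := hα0
  -- the snoc map is continuous
  have hsnoc_cont : Continuous (fun y' : Fin m → ℝ => (Fin.snoc y' (1:ℝ) : Fin (m+1) → ℝ)) := by
    apply continuous_pi
    intro i
    refine Fin.lastCases ?_ ?_ i
    · simpa using continuous_const
    · intro j; simpa using continuous_apply j
  have hne : ∀ y' : Fin m → ℝ, (Fin.snoc y' (1:ℝ) : Fin (m+1) → ℝ) ≠ 0 := by
    intro y' h
    have := congrFun h (Fin.last m)
    simp at this
  -- continuity of the integrand
  have hfc : Continuous (fun y' : Fin m → ℝ => K (Fin.snoc y' 1)) := by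
    rw [← continuousOn_univ]
    exact hcont.comp hsnoc_cont.continuousOn (fun y' _ => hne y')
  -- norm facts (sup norm)
  have hnorm_ge : ∀ (y' : Fin m → ℝ) (c : ℝ), ‖y'‖ ≤ ‖(Fin.snoc y' c : Fin (m+1) → ℝ)‖ := by
    intro y' c
    rw [pi_norm_le_iff_of_nonneg (norm_nonneg _)]
    intro j
    have := norm_le_pi_norm (Fin.snoc y' c : Fin (m+1) → ℝ) (Fin.castSucc j)
    simpa using this
  have hnorm_eq : ∀ (y' : Fin m → ℝ) (c : ℝ), |c| ≤ ‖y'‖ →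
      ‖(Fin.snoc y' c : Fin (m+1) → ℝ)‖ = ‖y'‖ := by
    intro y' c hc
    refine le_antisymm ?_ (hnorm_ge y' c)
    rw [pi_norm_le_iff_of_nonneg (norm_nonneg _)]
    intro i
    refine Fin.lastCases ?_ ?_ i
    · simpa using hc
    · intro j
      simpa using norm_le_pi_norm y' j
  -- Hölder constant on the unit sphere
  obtain ⟨C₀, hC₀⟩ := hholder (Metric.sphere 0 1) (isCompact_sphere 0 1)
    (by
      intro x hx
      simp only [Metric.mem_sphere, dist_zero_right] at hx
      simp only [Set.mem_setOf_eq]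
      intro h0
      rw [h0] at hx
      simpa using hx)
  -- key decay estimate
  have key : ∀ y' : Fin m → ℝ, 1 ≤ ‖y'‖ →
      |K (Fin.snoc y' 1)| ≤ (C₀ : ℝ) *
        ‖(Fin.snoc y' 1 : Fin (m+1) → ℝ)‖ ^ ((1 : ℝ) - ((m : ℝ) + 1) - (α : ℝ)) := by
    intro y' hy
    set x : Fin (m+1) → ℝ := Fin.snoc y' 1 with hxdef
    set w : Fin (m+1) → ℝ := Fin.snoc y' 0 with hwdef
    set r : ℝ := ‖y'‖ with hrdef
    have hr0 : (0 : ℝ) < r := lt_of_lt_of_le one_pos hy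
    have hrx : ‖x‖ = r := hnorm_eq y' 1 (by simpa using hy)
    have hrw : ‖w‖ = r := hnorm_eq y' 0 (by simp [norm_nonneg])
    set u : Fin (m+1) → ℝ := r⁻¹ • x with hudef
    set v : Fin (m+1) → ℝ := r⁻¹ • w with hvdef
    have hu : ‖u‖ = 1 := by
      rw [hudef, norm_smul, hrx, norm_inv, Real.norm_eq_abs, abs_of_pos hr0,
        inv_mul_cancel₀ hr0.ne']
    have hv : ‖v‖ = 1 := by
      rw [hvdef, norm_smul, hrw, norm_inv, Real.norm_eq_abs, abs_of_pos hr0,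
        inv_mul_cancel₀ hr0.ne']
    have hune : u ≠ 0 := by
      intro h; rw [h] at hu; simp at hu
    have hvne : v ≠ 0 := by
      intro h; rw [h] at hv; simp at hv
    have hKv : K v = 0 := by
      refine hvanish v hvne ?_
      simp [hvdef, hwdef]
    have hdist : dist u v = r⁻¹ := by
      rw [hudef, hvdef, dist_eq_norm, ← smul_sub, norm_smul, norm_inv, Real.norm_eq_abs,
        abs_of_pos hr0]
      have hxw : x - w = (Fin.snoc (0 : Fin m → ℝ) (1:ℝ) : Fin (m+1) → ℝ) := by
        funext i
        refine Fin.lastCases ?_ ?_ i <;> simp [hxdef, hwdef]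
      rw [hxw]
      have h1 : ‖(Fin.snoc (0 : Fin m → ℝ) (1:ℝ) : Fin (m+1) → ℝ)‖ = 1 := by
        refine le_antisymm ?_ ?_
        · rw [pi_norm_le_iff_of_nonneg zero_le_one]
          intro i
          refine Fin.lastCases ?_ ?_ i <;> simp
        · have := norm_le_pi_norm (Fin.snoc (0 : Fin m → ℝ) (1:ℝ) : Fin (m+1) → ℝ) (Fin.last m)
          simpa using this
      rw [h1, mul_one]
    have hum : u ∈ Metric.sphere (0 : Fin (m+1) → ℝ) 1 := by
      simpa [Metric.mem_sphere, dist_zero_right] using hu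
    have hvm : v ∈ Metric.sphere (0 : Fin (m+1) → ℝ) 1 := by
      simpa [Metric.mem_sphere, dist_zero_right] using hv
    have hKu : |K u| ≤ (C₀ : ℝ) * r⁻¹ ^ (α : ℝ) := by
      have := holderOnWith_dist_le hC₀ hum hvm
      rwa [hKv, hdist, Real.dist_eq, sub_zero] at this
    have hxu : x = r • u := by
      rw [hudef, smul_smul, mul_inv_cancel₀ hr0.ne', one_smul]
    have hKx : K x = r ^ ((1 : ℝ) - ((m : ℝ) + 1)) * K u := by
      rw [hxu]; exact hhom r hr0 u hune
    have hrp : (0:ℝ) < r ^ ((1 : ℝ) - ((m : ℝ) + 1)) := Real.rpow_pos_of_pos hr0 _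
    rw [hKx, abs_mul, abs_of_pos hrp, hrx]
    calc r ^ ((1 : ℝ) - ((m : ℝ) + 1)) * |K u|
        ≤ r ^ ((1 : ℝ) - ((m : ℝ) + 1)) * ((C₀ : ℝ) * r⁻¹ ^ (α : ℝ)) :=
          mul_le_mul_of_nonneg_left hKu hrp.le
      _ = (C₀ : ℝ) * r ^ ((1 : ℝ) - ((m : ℝ) + 1) - (α : ℝ)) := by
          rw [Real.inv_rpow hr0.le, ← Real.rpow_neg hr0.le,
            show (1:ℝ) - ((m:ℝ)+1) - (α:ℝ) = (1 - ((m:ℝ)+1)) + (-(α:ℝ)) by ring,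
            Real.rpow_add hr0]
          ring
  constructor
  · -- integrability
    set p : ℝ := (m : ℝ) + (α : ℝ) with hpdef
    have hp0 : (0:ℝ) < p := by positivity
    obtain ⟨M, hM⟩ := (isCompact_closedBall (0 : Fin m → ℝ) 1).exists_bound_of_continuousOn
      hfc.continuousOn
    have hM0 : (0:ℝ) ≤ M := le_trans (norm_nonneg _) (hM 0 (by simp))
    set A : ℝ := (M + (C₀ : ℝ)) * 2 ^ p with hAdef
    have hMC : (0:ℝ) ≤ M + (C₀:ℝ) := by positivity
    refine Integrable.mono' ((integrable_one_add_norm (μ := volume)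
      (E := Fin m → ℝ) (r := p) ?_).const_mul A) hfc.aestronglyMeasurable
      (Filter.Eventually.of_forall ?_)
    · rw [Module.finrank_fin_fun]
      simp only [hpdef]
      linarith
    · intro y'
      have h2p : (0:ℝ) < (2:ℝ) ^ p := Real.rpow_pos_of_pos two_pos p
      have h1y : (0:ℝ) < 1 + ‖y'‖ := by positivity
      rcases le_or_gt ‖y'‖ 1 with hy | hy
      · -- small y'
        have hb : ‖K (Fin.snoc y' (1:ℝ))‖ ≤ M := hM y' (by simpa using hy)
        have h2 : (1 + ‖y'‖ : ℝ) ^ (-p) ≥ (2:ℝ) ^ (-p) :=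
          Real.rpow_le_rpow_of_nonpos h1y (by linarith) (by linarith)
        have : (2:ℝ) ^ p * (2:ℝ) ^ (-p) = 1 := by
          rw [← Real.rpow_add two_pos]; simp
        calc ‖K (Fin.snoc y' (1:ℝ))‖ ≤ M := hb
          _ = M * ((2:ℝ) ^ p * (2:ℝ) ^ (-p)) := by rw [this, mul_one]
          _ ≤ (M + (C₀:ℝ)) * ((2:ℝ) ^ p * (1 + ‖y'‖) ^ (-p)) := by
              have h3 : (2:ℝ) ^ p * (2:ℝ) ^ (-p) ≤ (2:ℝ) ^ p * (1 + ‖y'‖) ^ (-p) :=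
                mul_le_mul_of_nonneg_left h2 h2p.le
              have h4 : (0:ℝ) ≤ (2:ℝ) ^ p * (2:ℝ) ^ (-p) := by positivity
              nlinarith [NNReal.coe_nonneg C₀]
          _ = A * (1 + ‖y'‖) ^ (-p) := by rw [hAdef]; ring
      · -- large y'
        have hy1 : (1:ℝ) ≤ ‖y'‖ := hy.le
        have hy0 : (0:ℝ) < ‖y'‖ := lt_of_lt_of_le one_pos hy1
        have hk := key y' hy1
        have hrx : ‖(Fin.snoc y' (1:ℝ) : Fin (m+1) → ℝ)‖ = ‖y'‖ :=
          hnorm_eq y' 1 (by simpa using hy1)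
        have hexp : (1 : ℝ) - ((m : ℝ) + 1) - (α : ℝ) = -p := by
          rw [hpdef]; ring
        rw [hrx, hexp] at hk
        have hhalf : (1 + ‖y'‖) / 2 ≤ ‖y'‖ := by linarith
        have hhp : (0:ℝ) < (1 + ‖y'‖) / 2 := by positivity
        have h5 : ‖y'‖ ^ (-p) ≤ ((1 + ‖y'‖) / 2) ^ (-p) :=
          Real.rpow_le_rpow_of_nonpos hhp hhalf (by linarith)
        have h6 : ((1 + ‖y'‖) / 2) ^ (-p) = (2:ℝ) ^ p * (1 + ‖y'‖) ^ (-p) := by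
          rw [Real.div_rpow h1y.le (by norm_num : (0:ℝ) ≤ 2),
            Real.rpow_neg (by norm_num : (0:ℝ) ≤ 2), div_inv_eq_mul]
          ring
        have hnn : (0:ℝ) ≤ (1 + ‖y'‖) ^ (-p) := by positivity
        calc ‖K (Fin.snoc y' (1:ℝ))‖ = |K (Fin.snoc y' 1)| := Real.norm_eq_abs _
          _ ≤ (C₀:ℝ) * ‖y'‖ ^ (-p) := hk
          _ ≤ (C₀:ℝ) * ((2:ℝ) ^ p * (1 + ‖y'‖) ^ (-p)) := by
              rw [← h6]; exact mul_le_mul_of_nonneg_left h5 C₀.coe_nonneg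
          _ ≤ A * (1 + ‖y'‖) ^ (-p) := by
              rw [hAdef]
              nlinarith [mul_nonneg (mul_nonneg hM0 h2p.le) hnn]
  · -- decay bound
    refine ⟨(C₀ : ℝ) + 1, 1, by positivity, ?_⟩
    intro y' hy
    have h := key y' hy
    have hpos : (0:ℝ) ≤ ‖(Fin.snoc y' (1:ℝ) : Fin (m+1) → ℝ)‖ ^
        ((1 : ℝ) - ((m : ℝ) + 1) - (α : ℝ)) := by positivity
    nlinarith
end

section
/- Let n ≥ 2, s = 1, and K : ℝⁿ \ {0} → ℝ be smooth, homogeneous of degree 1−n, vanishing on the open lower halfspace ℝⁿ₋. For f ∈ C_c^∞(ℝⁿ) define Tf(x) = ∫_{ℝⁿ₊} K(y) f(x+y) dy. Then there is a constant c (depending only on K) with ∫_{ℝ^{n−1}} |Tf(x',0)| dx' ≤ c ∫_{ℝⁿ₊} |f| dz for all f ∈ C_c^∞(ℝⁿ); in fact one may take c = ∫_{ℝ^{n−1}} |K(y',1)| dy'. -/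
open MeasureTheory Set
open scoped ENNReal NNReal

noncomputable def snocEquivM (m : ℕ) : (Fin (m+1) → ℝ) ≃ᵐ ℝ × (Fin m → ℝ) :=
  MeasurableEquiv.piFinSuccAbove (fun _ : Fin (m+1) => ℝ) (Fin.last m)

lemma snocEquivM_symm_apply (m : ℕ) (t : ℝ) (y' : Fin m → ℝ) :
    (snocEquivM m).symm (t, y') = Fin.snoc y' t := by
  have : (snocEquivM m).symm (t, y')
      = Fin.insertNth (α := fun _ => ℝ) (Fin.last m) t y' := rfl
  rw [this, Fin.insertNth_last']

lemma snocEquivM_fst (m : ℕ) (y : Fin (m+1) → ℝ) : ((snocEquivM m) y).1 = y (Fin.last m) := rfl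

lemma snocEquivM_mp (m : ℕ) : MeasurePreserving (snocEquivM m) volume volume :=
  volume_preserving_piFinSuccAbove (fun _ : Fin (m+1) => ℝ) (Fin.last m)

lemma measurable_snocM (m : ℕ) :
    Measurable fun p : ℝ × (Fin m → ℝ) => (Fin.snoc p.2 p.1 : Fin (m+1) → ℝ) := by
  have : (fun p : ℝ × (Fin m → ℝ) => (Fin.snoc p.2 p.1 : Fin (m+1) → ℝ))
      = fun p => (snocEquivM m).symm p := by
    funext p; rw [snocEquivM_symm_apply]
  rw [this]; exact (snocEquivM m).symm.measurable

lemma continuous_snocM (m : ℕ) (s : ℝ) :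
    Continuous fun y' : Fin m → ℝ => (Fin.snoc y' s : Fin (m+1) → ℝ) := by
  refine continuous_pi fun i => ?_
  refine Fin.lastCases ?_ (fun j => ?_) i
  · simpa using continuous_const
  · simpa using continuous_apply j

lemma snocM_ne_zero (m : ℕ) (y' : Fin m → ℝ) {s : ℝ} (hs : s ≠ 0) :
    (Fin.snoc y' s : Fin (m+1) → ℝ) ≠ 0 := by
  intro h
  have := congrFun h (Fin.last m)
  rw [Fin.snoc_last] at this
  exact hs this

lemma snoc_fubini (m : ℕ) (G : (Fin (m+1) → ℝ) → ℝ≥0∞)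
    (hG : AEMeasurable G (volume.restrict {y : Fin (m+1) → ℝ | 0 < y (Fin.last m)})) :
    ∫⁻ y in {y : Fin (m+1) → ℝ | 0 < y (Fin.last m)}, G y
      = ∫⁻ t in Ioi (0:ℝ), ∫⁻ y' : Fin m → ℝ, G (Fin.snoc y' t) := by
  have hpre : (snocEquivM m) ⁻¹' ((Ioi (0:ℝ)) ×ˢ (univ : Set (Fin m → ℝ)))
      = {y : Fin (m+1) → ℝ | 0 < y (Fin.last m)} := by
    ext y; simp [snocEquivM_fst, Set.mem_prod, mem_Ioi]
  have step1 : ∫⁻ y in {y : Fin (m+1) → ℝ | 0 < y (Fin.last m)}, G y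
      = ∫⁻ p in (Ioi (0:ℝ)) ×ˢ (univ : Set (Fin m → ℝ)), G ((snocEquivM m).symm p) ∂volume := by
    rw [← hpre, ← (snocEquivM_mp m).setLIntegral_comp_preimage_emb
        (snocEquivM m).measurableEmbedding (fun p => G ((snocEquivM m).symm p))]
    refine setLIntegral_congr_fun ?_ (fun y _ => ?_)
    · rw [hpre]; exact measurableSet_lt measurable_const (measurable_pi_apply _)
    · rw [MeasurableEquiv.symm_apply_apply]
  rw [step1]
  have hmapeq : Measure.map (snocEquivM m)
        (volume.restrict {y : Fin (m+1) → ℝ | 0 < y (Fin.last m)})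
      = (volume : Measure (ℝ × (Fin m → ℝ))).restrict ((Ioi (0:ℝ)) ×ˢ univ) := by
    rw [← hpre, ← (snocEquivM_mp m).map_eq, Measure.restrict_map (snocEquivM m).measurable
      ((measurableSet_Ioi).prod MeasurableSet.univ)]
  have hGae : AEMeasurable (fun p : ℝ × (Fin m → ℝ) => G ((snocEquivM m).symm p))
      ((volume : Measure (ℝ × (Fin m → ℝ))).restrict ((Ioi (0:ℝ)) ×ˢ univ)) := by
    rw [← hmapeq]
    exact hG.comp_quasiMeasurePreserving
      ⟨(snocEquivM m).symm.measurable, by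
        rw [Measure.map_map (snocEquivM m).symm.measurable (snocEquivM m).measurable,
          MeasurableEquiv.symm_comp_self, Measure.map_id]⟩
  have hrw : (volume : Measure (ℝ × (Fin m → ℝ))).restrict ((Ioi (0:ℝ)) ×ˢ univ)
      = ((volume : Measure ℝ).restrict (Ioi 0)).prod (volume : Measure (Fin m → ℝ)) := by
    rw [Measure.volume_eq_prod, ← Measure.prod_restrict, Measure.restrict_univ]
  calc ∫⁻ p in (Ioi (0:ℝ)) ×ˢ (univ : Set (Fin m → ℝ)), G ((snocEquivM m).symm p) ∂volume
      = ∫⁻ p, G ((snocEquivM m).symm p)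
          ∂(((volume : Measure ℝ).restrict (Ioi 0)).prod (volume : Measure (Fin m → ℝ))) := by
        rw [← hrw]
    _ = ∫⁻ t in Ioi (0:ℝ), ∫⁻ y' : Fin m → ℝ, G (Fin.snoc y' t) := by
        rw [lintegral_prod _ (hrw ▸ hGae)]
        exact lintegral_congr fun t => lintegral_congr fun y' => by
          rw [snocEquivM_symm_apply]

lemma scale_lemma (m : ℕ) (K : (Fin (m+1) → ℝ) → ℝ)
    (hhom : ∀ l : ℝ, 0 < l → ∀ x : Fin (m + 1) → ℝ, x ≠ 0 →
      K (l • x) = l ^ ((1 : ℝ) - ((m : ℝ) + 1)) * K x)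
    (hKcont : ContinuousOn K {x | x ≠ 0}) {t : ℝ} (ht : 0 < t) :
    ∫⁻ y' : Fin m → ℝ, (‖K (Fin.snoc y' t)‖₊ : ℝ≥0∞)
      = ∫⁻ y' : Fin m → ℝ, (‖K (Fin.snoc y' 1)‖₊ : ℝ≥0∞) := by
  have htne : t ≠ 0 := ne_of_gt ht
  have key : ∀ y' : Fin m → ℝ,
      K (Fin.snoc y' t) = t ^ (-(m:ℝ)) * K (Fin.snoc (t⁻¹ • y') 1) := by
    intro y'
    have hx : (Fin.snoc (t⁻¹ • y') 1 : Fin (m+1) → ℝ) ≠ 0 := snocM_ne_zero m _ one_ne_zero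
    have h1 := hhom t ht _ hx
    have h2 : t • (Fin.snoc (t⁻¹ • y') 1 : Fin (m+1) → ℝ) = Fin.snoc y' t := by
      funext i
      refine Fin.lastCases ?_ (fun j => ?_) i
      · simp [Fin.snoc_last]
      · simp [Fin.snoc_castSucc, smul_eq_mul, mul_inv_cancel_left₀ htne]
    rw [h2] at h1
    have h3 : (1 : ℝ) - ((m : ℝ) + 1) = -(m:ℝ) := by ring
    rw [h3] at h1
    exact h1
  have hgm : Measurable fun y' : Fin m → ℝ => K (Fin.snoc y' 1) :=
    (hKcont.comp_continuous (continuous_snocM m 1) fun y' =>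
      snocM_ne_zero m y' one_ne_zero).measurable
  calc ∫⁻ y' : Fin m → ℝ, (‖K (Fin.snoc y' t)‖₊ : ℝ≥0∞)
      = ∫⁻ y' : Fin m → ℝ, (‖t ^ (-(m:ℝ))‖₊ : ℝ≥0∞) * ‖K (Fin.snoc (t⁻¹ • y') 1)‖₊ := by
        refine lintegral_congr fun y' => ?_
        rw [key y', nnnorm_mul, ENNReal.coe_mul]
    _ = (‖t ^ (-(m:ℝ))‖₊ : ℝ≥0∞) * ∫⁻ y' : Fin m → ℝ, (‖K (Fin.snoc (t⁻¹ • y') 1)‖₊ : ℝ≥0∞) :=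
        lintegral_const_mul' _ _ ENNReal.coe_ne_top
    _ = (‖t ^ (-(m:ℝ))‖₊ : ℝ≥0∞) * (ENNReal.ofReal (t ^ m) *
          ∫⁻ y' : Fin m → ℝ, (‖K (Fin.snoc y' 1)‖₊ : ℝ≥0∞)) := by
        congr 1
        have hmap := Measure.map_addHaar_smul (volume : Measure (Fin m → ℝ))
          (inv_ne_zero htne)
        have hcomp : ∫⁻ y' : Fin m → ℝ, (‖K (Fin.snoc (t⁻¹ • y') 1)‖₊ : ℝ≥0∞)
            = ∫⁻ z, (‖K (Fin.snoc z 1)‖₊ : ℝ≥0∞) ∂(Measure.map (t⁻¹ • ·) volume) := by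
          rw [lintegral_map hgm.nnnorm.coe_nnreal_ennreal (measurable_const_smul _)]
        rw [hcomp, hmap, lintegral_smul_measure]
        congr 1
        rw [Module.finrank_fintype_fun_eq_card, Fintype.card_fin]
        rw [← inv_pow, inv_inv, abs_of_pos (pow_pos ht m)]
    _ = ∫⁻ y' : Fin m → ℝ, (‖K (Fin.snoc y' 1)‖₊ : ℝ≥0∞) := by
        rw [← mul_assoc]
        have h1 : (‖t ^ (-(m:ℝ))‖₊ : ℝ≥0∞) = ENNReal.ofReal ((t ^ m)⁻¹) := by
          rw [← enorm_eq_nnnorm, Real.enorm_eq_ofReal (Real.rpow_nonneg (le_of_lt ht) _)]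
          congr 1
          rw [Real.rpow_neg (le_of_lt ht), Real.rpow_natCast]
        rw [h1, ← ENNReal.ofReal_mul (inv_nonneg.mpr (le_of_lt (pow_pos ht m))),
          inv_mul_cancel₀ (ne_of_gt (pow_pos ht m)), ENNReal.ofReal_one, one_mul]

/-- For `K : ℝⁿ \ {0} → ℝ` smooth away from 0, homogeneous of degree
`1 − n`, vanishing on the open lower halfspace, with `K(·,1)` integrable, the operator
`Tf(x) = ∫_{ℝⁿ₊} K(y) f(x+y) dy` satisfies the trace bound
`∫_{ℝ^{n−1}} |Tf(x',0)| dx' ≤ (∫_{ℝ^{n−1}} |K(y',1)| dy') · ∫_{ℝⁿ₊} |f|`. -/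
theorem stmt_1 (m : ℕ) (hm : 1 ≤ m) (K : (Fin (m + 1) → ℝ) → ℝ)
    (hsmooth : ContDiffOn ℝ (⊤ : ℕ∞) K {x | x ≠ 0})
    (hhom : ∀ l : ℝ, 0 < l → ∀ x : Fin (m + 1) → ℝ, x ≠ 0 →
      K (l • x) = l ^ ((1 : ℝ) - ((m : ℝ) + 1)) * K x)
    (hvanish : ∀ x : Fin (m + 1) → ℝ, x (Fin.last m) < 0 → K x = 0)
    (hint : Integrable (fun y' : Fin m → ℝ => K (Fin.snoc y' 1)))
    (f : (Fin (m + 1) → ℝ) → ℝ) (hf : ContDiff ℝ (⊤ : ℕ∞) f) (hfc : HasCompactSupport f) :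
    ∫ x' : Fin m → ℝ,
        |∫ y in {y : Fin (m + 1) → ℝ | 0 < y (Fin.last m)},
            K y * f ((Fin.snoc x' 0 : Fin (m + 1) → ℝ) + y)|
      ≤ (∫ y' : Fin m → ℝ, |K (Fin.snoc y' 1)|) *
          ∫ z in {y : Fin (m + 1) → ℝ | 0 < y (Fin.last m)}, |f z| := by
  classical
  set S : Set (Fin (m + 1) → ℝ) := {y : Fin (m + 1) → ℝ | 0 < y (Fin.last m)} with hSdef
  have hS : MeasurableSet S := measurableSet_lt measurable_const (measurable_pi_apply _)
  have hfm : Measurable f := hf.continuous.measurable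
  have hfi : Integrable f := hf.continuous.integrable_of_hasCompactSupport hfc
  have hKcont : ContinuousOn K {x | x ≠ 0} := hsmooth.continuousOn
  -- global a.e. measurability of K
  have hzero : (volume : Measure (Fin (m + 1) → ℝ)) {(0 : Fin (m + 1) → ℝ)} = 0 := by
    refine measure_mono_null (fun x hx => ?_) (Measure.pi_hyperplane _ (Fin.last m) 0)
    rw [Set.mem_singleton_iff] at hx
    subst hx; rfl
  have hKae : AEMeasurable K (volume : Measure (Fin (m + 1) → ℝ)) := by
    have h1 : AEMeasurable K ((volume : Measure (Fin (m + 1) → ℝ)).restrict {x | x ≠ 0}) :=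
      hKcont.aemeasurable (by
        have : {x : Fin (m + 1) → ℝ | x ≠ 0} = {(0 : Fin (m + 1) → ℝ)}ᶜ := by
          ext x; simp
        rw [this]; exact (measurableSet_singleton 0).compl)
    rwa [Measure.restrict_eq_self_of_ae_mem (by
      rw [ae_iff]
      refine measure_mono_null (fun x hx => ?_) hzero
      simpa using hx)] at h1
  have hKS : AEMeasurable K (volume.restrict S) := hKae.restrict
  -- measurability of the product integrand
  have hadd_meas : Measurable
      (fun p : (Fin m → ℝ) × (Fin (m + 1) → ℝ) => f ((Fin.snoc p.1 0 : Fin (m + 1) → ℝ) + p.2)) := by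
    refine hfm.comp (Measurable.add ?_ measurable_snd)
    exact (measurable_snocM m).comp (measurable_const.prodMk measurable_fst)
  have hKsnd : AEMeasurable (fun p : (Fin m → ℝ) × (Fin (m + 1) → ℝ) => K p.2)
      ((volume : Measure (Fin m → ℝ)).prod (volume.restrict S)) :=
    hKS.comp_quasiMeasurePreserving Measure.quasiMeasurePreserving_snd
  have hprod_ae : AEMeasurable
      (fun p : (Fin m → ℝ) × (Fin (m + 1) → ℝ) =>
        (‖K p.2‖₊ : ℝ≥0∞) * ‖f ((Fin.snoc p.1 0 : Fin (m + 1) → ℝ) + p.2)‖₊)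
      ((volume : Measure (Fin m → ℝ)).prod (volume.restrict S)) :=
    hKsnd.nnnorm.coe_nnreal_ennreal.mul hadd_meas.nnnorm.coe_nnreal_ennreal.aemeasurable
  have hTf_aesm : AEStronglyMeasurable
      (fun x' : Fin m → ℝ => ∫ y in S, K y * f ((Fin.snoc x' 0 : Fin (m + 1) → ℝ) + y))
      (volume : Measure (Fin m → ℝ)) := by
    refine AEStronglyMeasurable.integral_prod_right' (f := fun p : (Fin m → ℝ) × (Fin (m + 1) → ℝ)
      => K p.2 * f ((Fin.snoc p.1 0 : Fin (m + 1) → ℝ) + p.2)) ?_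
    exact hKsnd.aestronglyMeasurable.mul hadd_meas.aestronglyMeasurable
  -- the slice function h
  set h : ℝ → ℝ≥0∞ := fun t => ∫⁻ x' : Fin m → ℝ, (‖f (Fin.snoc x' t)‖₊ : ℝ≥0∞) with hh
  have h_meas : Measurable h := by
    refine Measurable.lintegral_prod_right ?_
    exact ((hfm.comp (measurable_snocM m)).nnnorm.coe_nnreal_ennreal)
  -- translation invariance
  have htrans : ∀ y : Fin (m + 1) → ℝ,
      ∫⁻ x' : Fin m → ℝ, (‖f ((Fin.snoc x' 0 : Fin (m + 1) → ℝ) + y)‖₊ : ℝ≥0∞)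
        = h (y (Fin.last m)) := by
    intro y
    have hsa : ∀ x' : Fin m → ℝ, (Fin.snoc x' 0 : Fin (m + 1) → ℝ) + y
        = Fin.snoc (x' + fun j => y j.castSucc) (y (Fin.last m)) := by
      intro x'; funext i
      refine Fin.lastCases ?_ (fun j => ?_) i
      · simp [Fin.snoc_last]
      · simp [Fin.snoc_castSucc]
    simp_rw [hsa]
    exact lintegral_add_right_eq_self
      (fun u : Fin m → ℝ => (‖f (Fin.snoc u (y (Fin.last m)))‖₊ : ℝ≥0∞)) _
  -- constants
  set c : ℝ := ∫ y' : Fin m → ℝ, |K (Fin.snoc y' 1)| with hc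
  set I : ℝ := ∫ z in S, |f z| with hI
  have hc0 : 0 ≤ c := integral_nonneg fun _ => abs_nonneg _
  have hI0 : 0 ≤ I := integral_nonneg fun _ => abs_nonneg _
  have hce : ∫⁻ y' : Fin m → ℝ, (‖K (Fin.snoc y' 1)‖₊ : ℝ≥0∞) = ENNReal.ofReal c := by
    simp_rw [← enorm_eq_nnnorm]
    rw [← ofReal_integral_norm_eq_lintegral_enorm hint, hc]
    simp [Real.norm_eq_abs]
  have hfe : ∫⁻ y in S, (‖f y‖₊ : ℝ≥0∞) = ENNReal.ofReal I := by
    simp_rw [← enorm_eq_nnnorm]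
    rw [← ofReal_integral_norm_eq_lintegral_enorm hfi.integrableOn, hI]
    simp [Real.norm_eq_abs]
  -- the key lintegral estimate
  have key : ∫⁻ x' : Fin m → ℝ,
      (‖∫ y in S, K y * f ((Fin.snoc x' 0 : Fin (m + 1) → ℝ) + y)‖₊ : ℝ≥0∞)
      ≤ ENNReal.ofReal c * ENNReal.ofReal I := by
    have hGmeas : AEMeasurable (fun y : Fin (m + 1) → ℝ => (‖K y‖₊ : ℝ≥0∞) * h (y (Fin.last m)))
        (volume.restrict S) :=
      hKS.nnnorm.coe_nnreal_ennreal.mul ((h_meas.comp (measurable_pi_apply (Fin.last m))).aemeasurable)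
    calc ∫⁻ x' : Fin m → ℝ,
        (‖∫ y in S, K y * f ((Fin.snoc x' 0 : Fin (m + 1) → ℝ) + y)‖₊ : ℝ≥0∞)
        ≤ ∫⁻ x' : Fin m → ℝ, ∫⁻ y in S,
            (‖K y‖₊ : ℝ≥0∞) * ‖f ((Fin.snoc x' 0 : Fin (m + 1) → ℝ) + y)‖₊ := by
          refine lintegral_mono fun x' => ?_
          refine le_trans (enorm_integral_le_lintegral_enorm _) (le_of_eq ?_)
          exact lintegral_congr fun y => by rw [enorm_mul]; rfl
      _ = ∫⁻ y in S, ∫⁻ x' : Fin m → ℝ,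
            (‖K y‖₊ : ℝ≥0∞) * ‖f ((Fin.snoc x' 0 : Fin (m + 1) → ℝ) + y)‖₊ :=
          lintegral_lintegral_swap hprod_ae
      _ = ∫⁻ y in S, (‖K y‖₊ : ℝ≥0∞) * h (y (Fin.last m)) := by
          refine lintegral_congr fun y => ?_
          rw [lintegral_const_mul' _ _ ENNReal.coe_ne_top, htrans y]
      _ = ∫⁻ t in Ioi (0:ℝ), ∫⁻ y' : Fin m → ℝ, (‖K (Fin.snoc y' t)‖₊ : ℝ≥0∞) * h t := by
          rw [hSdef] at hGmeas ⊢
          rw [snoc_fubini m (fun y => (‖K y‖₊ : ℝ≥0∞) * h (y (Fin.last m))) hGmeas]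
          exact lintegral_congr fun t => lintegral_congr fun y' => by rw [Fin.snoc_last]
      _ = ∫⁻ t in Ioi (0:ℝ), ENNReal.ofReal c * h t := by
          refine setLIntegral_congr_fun measurableSet_Ioi
            (fun t ht => ?_)
          have hmt : Measurable fun y' : Fin m → ℝ => K (Fin.snoc y' t) :=
            (hKcont.comp_continuous (continuous_snocM m t) fun y' =>
              snocM_ne_zero m y' (ne_of_gt ht)).measurable
          rw [lintegral_mul_const _ hmt.nnnorm.coe_nnreal_ennreal, scale_lemma m K hhom hKcont ht, hce,
            mul_comm]
      _ = ENNReal.ofReal c * ∫⁻ t in Ioi (0:ℝ), h t :=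
          lintegral_const_mul' _ _ ENNReal.ofReal_ne_top
      _ = ENNReal.ofReal c * ENNReal.ofReal I := by
          congr 1
          rw [← hfe, hSdef]
          rw [snoc_fubini m (fun y => (‖f y‖₊ : ℝ≥0∞)) hfm.nnnorm.coe_nnreal_ennreal.aemeasurable.restrict]
  have hTop : ENNReal.ofReal c * ENNReal.ofReal I ≠ ⊤ :=
    ENNReal.mul_ne_top ENNReal.ofReal_ne_top ENNReal.ofReal_ne_top
  calc ∫ x' : Fin m → ℝ, |∫ y in S, K y * f ((Fin.snoc x' 0 : Fin (m + 1) → ℝ) + y)|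
      = ∫ x' : Fin m → ℝ, ‖∫ y in S, K y * f ((Fin.snoc x' 0 : Fin (m + 1) → ℝ) + y)‖ := by
        simp_rw [Real.norm_eq_abs]
    _ = (∫⁻ x' : Fin m → ℝ,
          (‖∫ y in S, K y * f ((Fin.snoc x' 0 : Fin (m + 1) → ℝ) + y)‖₊ : ℝ≥0∞)).toReal :=
        integral_norm_eq_lintegral_enorm hTf_aesm
    _ ≤ (ENNReal.ofReal c * ENNReal.ofReal I).toReal := ENNReal.toReal_mono hTop key
    _ = c * I := by
        rw [← ENNReal.ofReal_mul hc0, ENNReal.toReal_ofReal (mul_nonneg hc0 hI0)]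
end

section
/- Let K : ℝⁿ \ {0} → ℝ be continuous, homogeneous of degree s−n with 1 ≤ s < n, of class C^k near the unit sphere with k ≥ 1, and vanishing on the closed lower halfspace {xₙ ≤ 0} \ {0}. Then for every x = (x', t) with |x| = 1 (ℓ¹-norm) one has |K(x', t)| ≤ c₂ |t|^k, where c₂ depends on the C^k norm of K on the unit sphere. -/
open MeasureTheory Finset
open Set Filter Topology
open scoped Nat

/-- Helper B: within-iterated-derivative equals global one for globally smooth functions. -/
lemma myIteratedDerivWithin_eq {f : ℝ → ℝ} {k j : ℕ} (hf : ContDiff ℝ (k : ℕ∞) f)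
    (hj : j ≤ k) {s : Set ℝ} (hs : UniqueDiffOn ℝ s) {x : ℝ} (hx : x ∈ s) :
    iteratedDerivWithin j f s x = iteratedDeriv j f x := by
  rw [iteratedDerivWithin, iteratedDeriv]
  congr 1
  have h := (contDiff_iff_ftaylorSeries.mp hf).hasFTaylorSeriesUpToOn s
  exact (h.eq_iteratedFDerivWithin_of_uniqueDiffOn (by exact_mod_cast hj) hs hx).symm

/-- Helper A: directional iterated derivative along a line. -/
lemma myIteratedDeriv_line {E F : Type*} [NormedAddCommGroup E] [NormedSpace ℝ E]
    [NormedAddCommGroup F] [NormedSpace ℝ F]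
    {f : E → F} {s : Set E} (hs : IsOpen s) {k : ℕ} (hf : ContDiffOn ℝ (k : ℕ∞) f s)
    (a v : E) :
    ∀ n, n ≤ k → ∀ t : ℝ, a + t • v ∈ s →
      iteratedDeriv n (fun τ => f (a + τ • v)) t
        = iteratedFDeriv ℝ n f (a + t • v) (fun _ => v) := by
  intro n
  induction n with
  | zero => intro _ t _; simp [iteratedDeriv_zero, iteratedFDeriv_zero_apply]
  | succ n ih =>
    intro hn t ht
    have hline : Continuous fun τ : ℝ => a + τ • v := by continuity
    have hev : (fun τ => iteratedDeriv n (fun τ' => f (a + τ' • v)) τ)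
        =ᶠ[𝓝 t] fun τ => iteratedFDeriv ℝ n f (a + τ • v) (fun _ => v) := by
      have hmem : ∀ᶠ τ in 𝓝 t, a + τ • v ∈ s :=
        hline.continuousAt.preimage_mem_nhds (hs.mem_nhds ht)
      filter_upwards [hmem] with τ hτ using ih (Nat.le_of_succ_le hn) τ hτ
    rw [iteratedDeriv_succ, hev.deriv_eq]
    have hderiv_line : HasDerivAt (fun τ : ℝ => a + τ • v) v t := by
      simpa using ((hasDerivAt_id t).smul_const v).const_add a
    -- differentiability of the global iterated derivative at a + t • v
    have hEq : EqOn (iteratedFDerivWithin ℝ n f s) (iteratedFDeriv ℝ n f) s :=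
      iteratedFDerivWithin_of_isOpen n hs
    have hdiffW : DifferentiableWithinAt ℝ (iteratedFDerivWithin ℝ n f s) s (a + t • v) :=
      (hf.differentiableOn_iteratedFDerivWithin
        (by exact_mod_cast hn) hs.uniqueDiffOn) _ ht
    have hdiff : DifferentiableAt ℝ (iteratedFDeriv ℝ n f) (a + t • v) := by
      have := (hdiffW.differentiableAt (hs.mem_nhds ht))
      exact this.congr_of_eventuallyEq
        ((eventually_of_mem (hs.mem_nhds ht) fun y hy => (hEq hy).symm))
    have h1 : HasDerivAt (fun τ => iteratedFDeriv ℝ n f (a + τ • v))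
        (fderiv ℝ (iteratedFDeriv ℝ n f) (a + t • v) v) t :=
      hdiff.hasFDerivAt.comp_hasDerivAt t hderiv_line
    have h2 := ((ContinuousMultilinearMap.apply ℝ (fun _ : Fin n => E) F
        (fun _ => v)).hasFDerivAt.comp_hasDerivAt t h1)
    have h2' : HasDerivAt (fun τ => (iteratedFDeriv ℝ n f (a + τ • v)) fun _ : Fin n => v)
        ((ContinuousMultilinearMap.apply ℝ (fun _ : Fin n => E) F (fun _ => v))
          ((fderiv ℝ (iteratedFDeriv ℝ n f) (a + t • v)) v)) t := h2
    rw [h2'.deriv, iteratedFDeriv_succ_apply_left]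
    rfl

open Set Filter Topology

set_option maxHeartbeats 1000000 in
/-- For `K : ℝⁿ \ {0} → ℝ` continuous away from 0, homogeneous of degree
`s − n` with `1 ≤ s < n`, of class `C^k` (k ≥ 1) on an open neighbourhood of the unit
sphere, and vanishing on the closed lower halfspace minus the origin, one has
`|K(x', t)| ≤ c₂ |t|^k` for every `x = (x', t)` with `|x| = 1` in the ℓ¹-norm. -/
theorem stmt_5 (m k : ℕ) (hm : 1 ≤ m) (hk : 1 ≤ k) (s : ℝ) (hs1 : 1 ≤ s)
    (hsn : s < (m : ℝ) + 1)
    (K : (Fin (m + 1) → ℝ) → ℝ)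
    (hcont : ContinuousOn K {x | x ≠ 0})
    (hhom : ∀ l : ℝ, 0 < l → ∀ x : Fin (m + 1) → ℝ, x ≠ 0 →
      K (l • x) = l ^ (s - ((m : ℝ) + 1)) * K x)
    (U : Set (Fin (m + 1) → ℝ)) (hU : IsOpen U)
    (hUs : Metric.sphere (0 : Fin (m + 1) → ℝ) 1 ⊆ U)
    (hKU : ContDiffOn ℝ k K U)
    (hvanish : ∀ x : Fin (m + 1) → ℝ, x ≠ 0 → x (Fin.last m) ≤ 0 → K x = 0) :
    ∃ c₂ : ℝ, ∀ (x' : Fin m → ℝ) (t : ℝ), (∑ i, |x' i|) + |t| = 1 →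
      |K (Fin.snoc x' t)| ≤ c₂ * |t| ^ k := by
  obtain ⟨k', rfl⟩ : ∃ k', k = k' + 1 := ⟨k - 1, (Nat.succ_pred_eq_of_pos hk).symm⟩
  have hΩ : IsOpen {x : Fin (m + 1) → ℝ | x ≠ 0} := isOpen_ne
  -- K is C^k on the complement of the origin
  have hK : ContDiffOn ℝ ((k' + 1 : ℕ) : ℕ∞) K {x : Fin (m + 1) → ℝ | x ≠ 0} := by
    intro x₀ hx₀
    have hx₀' : x₀ ≠ 0 := hx₀
    have hl0 : (0 : ℝ) < ‖x₀‖ := norm_pos_iff.mpr hx₀'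
    set l : ℝ := ‖x₀‖ with hl
    have hmemU : l⁻¹ • x₀ ∈ U := by
      apply hUs
      rw [mem_sphere_zero_iff_norm, norm_smul, norm_inv, norm_norm]
      exact inv_mul_cancel₀ hl0.ne'
    have hφ : ContDiffAt ℝ ((k' + 1 : ℕ) : ℕ∞)
        (fun x => l ^ (s - ((m : ℝ) + 1)) * K (l⁻¹ • x)) x₀ := by
      have h1 : ContDiffAt ℝ ((k' + 1 : ℕ) : ℕ∞) K (l⁻¹ • x₀) :=
        hKU.contDiffAt (hU.mem_nhds hmemU)
      have h2 : ContDiffAt ℝ ((k' + 1 : ℕ) : ℕ∞)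
          (fun x : Fin (m + 1) → ℝ => l⁻¹ • x) x₀ :=
        (contDiff_const_smul l⁻¹).contDiffAt
      exact contDiffAt_const.mul (h1.comp x₀ h2)
    have hev : K =ᶠ[𝓝 x₀] fun x => l ^ (s - ((m : ℝ) + 1)) * K (l⁻¹ • x) := by
      filter_upwards [hΩ.mem_nhds hx₀] with x hx
      have hx' : x ≠ 0 := hx
      have h := hhom l⁻¹ (inv_pos.mpr hl0) x hx'
      rw [h, Real.inv_rpow hl0.le, ← mul_assoc,
        mul_inv_cancel₀ (Real.rpow_pos_of_pos hl0 _).ne', one_mul]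
    exact (hφ.congr_of_eventuallyEq hev).contDiffWithinAt
  -- the ℓ¹ norm
  set N : (Fin (m + 1) → ℝ) → ℝ := fun y => ∑ i, |y i| with hN
  have hNcont : Continuous N := by
    apply continuous_finset_sum
    exact fun i _ => (continuous_apply i).abs
  have hN0 : N 0 = 0 := by simp [hN]
  -- the compact annulus
  set S : Set (Fin (m + 1) → ℝ) := N ⁻¹' Icc (1/2 : ℝ) 1 with hSdef
  have hSclosed : IsClosed S := isClosed_Icc.preimage hNcont
  have hSsubΩ : S ⊆ {x : Fin (m + 1) → ℝ | x ≠ 0} := by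
    intro y hy h0
    rw [h0] at hy
    have := hy.1
    rw [hN0] at this
    norm_num at this
  have hScompact : IsCompact S := by
    refine (isCompact_closedBall (0 : Fin (m + 1) → ℝ) 1).of_isClosed_subset hSclosed ?_
    intro y hy
    rw [Metric.mem_closedBall, dist_zero_right]
    rw [pi_norm_le_iff_of_nonneg zero_le_one]
    intro i
    calc ‖y i‖ = |y i| := rfl
      _ ≤ ∑ j, |y j| := Finset.single_le_sum (fun j _ => abs_nonneg (y j)) (Finset.mem_univ i)
      _ ≤ 1 := hy.2
  -- bound on the k-th derivative on S
  have hΦcont : ContinuousOn (iteratedFDeriv ℝ (k' + 1) K) {x : Fin (m + 1) → ℝ | x ≠ 0} := by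
    have h1 := hK.continuousOn_iteratedFDerivWithin (by norm_cast) hΩ.uniqueDiffOn
    exact h1.congr fun y hy => ((iteratedFDerivWithin_of_isOpen _ hΩ) hy).symm
  obtain ⟨C, hC⟩ := hScompact.exists_bound_of_continuousOn (hΦcont.mono hSsubΩ)
  obtain ⟨M, hM⟩ := hScompact.exists_bound_of_continuousOn (hcont.mono hSsubΩ)
  set c₂ : ℝ := max C 0 + max M 0 * 2 ^ (k' + 1) with hc₂
  have hc₂0 : 0 ≤ c₂ := by positivity
  refine ⟨c₂, ?_⟩
  intro x' t ht1
  -- basic facts about snoc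
  set e : Fin (m + 1) → ℝ := Pi.single (Fin.last m) 1 with he
  have henorm : ‖e‖ = 1 := by rw [he, Pi.norm_single, norm_one]
  have hsnoc : ∀ τ : ℝ, Fin.snoc x' (0 : ℝ) + τ • e = Fin.snoc x' τ := by
    intro τ
    funext i
    refine Fin.lastCases ?_ ?_ i
    · simp [he, Fin.snoc_last]
    · intro j
      simp [he, Fin.snoc_castSucc, Pi.single_eq_of_ne (Fin.castSucc_lt_last j).ne]
  have hNsnoc : ∀ τ : ℝ, N (Fin.snoc x' τ) = (∑ i, |x' i|) + |τ| := by
    intro τ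
    simp [hN, Fin.sum_univ_castSucc, Fin.snoc_castSucc, Fin.snoc_last]
  have hsum0 : 0 ≤ ∑ i, |x' i| := Finset.sum_nonneg fun i _ => abs_nonneg _
  have hne : ∀ τ : ℝ, (∑ i, |x' i|) + |τ| ≠ 0 → Fin.snoc x' τ ≠ (0 : Fin (m + 1) → ℝ) := by
    intro τ h h0
    apply h
    rw [← hNsnoc τ, h0, hN0]
  rcases le_or_gt t 0 with h0 | hpos
  · -- t ≤ 0 : K vanishes
    have hxne : Fin.snoc x' t ≠ (0 : Fin (m + 1) → ℝ) := hne t (by rw [ht1]; norm_num)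
    rw [hvanish _ hxne (by simpa [Fin.snoc_last] using h0), abs_zero]
    positivity
  · have htabs : |t| = t := abs_of_pos hpos
    have hx's : ∑ i, |x' i| = 1 - t := by rw [← ht1, htabs]; ring
    have htle1 : t ≤ 1 := by nlinarith
    rcases le_or_gt t (1/2) with hhalf | hbig
    · -- Taylor case
      have hmemΩ : ∀ τ : ℝ, Fin.snoc x' (0 : ℝ) + τ • e ∈
          {x : Fin (m + 1) → ℝ | x ≠ 0} := by
        intro τ
        rw [hsnoc τ]
        exact hne τ (by rw [hx's]; nlinarith [abs_nonneg τ])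
      have hg : ContDiff ℝ ((k' + 1 : ℕ) : ℕ∞) (fun τ : ℝ => K (Fin.snoc x' (0 : ℝ) + τ • e)) := by
        refine hK.comp_contDiff ?_ hmemΩ
        exact contDiff_const.add (contDiff_id.smul contDiff_const)
      have hgzero : ∀ τ : ℝ, τ ≤ 0 → K (Fin.snoc x' (0 : ℝ) + τ • e) = 0 := by
        intro τ hτ
        simp only [hsnoc τ]
        exact hvanish _ (by rw [← hsnoc τ]; exact hmemΩ τ) (by simpa [Fin.snoc_last] using hτ)
      have hneg : ∀ j, j ≤ k' + 1 → ∀ τ : ℝ, τ < 0 → iteratedDeriv j (fun τ : ℝ => K (Fin.snoc x' (0 : ℝ) + τ • e)) τ = 0 := by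
        intro j
        induction j with
        | zero => intro _ τ hτ; simpa [iteratedDeriv_zero] using hgzero τ hτ.le
        | succ j ihj =>
          intro hj τ hτ
          rw [iteratedDeriv_succ]
          have hev : iteratedDeriv j (fun τ : ℝ => K (Fin.snoc x' (0 : ℝ) + τ • e)) =ᶠ[𝓝 τ] fun _ => (0 : ℝ) := by
            filter_upwards [Iio_mem_nhds hτ] with y hy
            exact ihj (Nat.le_of_succ_le hj) y hy
          rw [hev.deriv_eq, deriv_const]
      have hzero0 : ∀ j, j ≤ k' + 1 → iteratedDeriv j (fun τ : ℝ => K (Fin.snoc x' (0 : ℝ) + τ • e)) 0 = 0 := by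
        intro j hj
        have hcont' : ContinuousAt (iteratedDeriv j (fun τ : ℝ => K (Fin.snoc x' (0 : ℝ) + τ • e))) 0 :=
          (hg.continuous_iteratedDeriv j (by exact_mod_cast hj)).continuousAt
        have h1 : Tendsto (iteratedDeriv j (fun τ : ℝ => K (Fin.snoc x' (0 : ℝ) + τ • e))) (𝓝[<] (0 : ℝ)) (𝓝 (iteratedDeriv j (fun τ : ℝ => K (Fin.snoc x' (0 : ℝ) + τ • e)) 0)) :=
          hcont'.tendsto.mono_left nhdsWithin_le_nhds
        have h2 : Tendsto (iteratedDeriv j (fun τ : ℝ => K (Fin.snoc x' (0 : ℝ) + τ • e))) (𝓝[<] (0 : ℝ)) (𝓝 0) := by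
          refine Tendsto.congr' ?_ tendsto_const_nhds
          filter_upwards [self_mem_nhdsWithin] with y hy
          exact (hneg j hj y hy).symm
        exact tendsto_nhds_unique h1 h2
      have hudIcc : UniqueDiffOn ℝ (Icc (0 : ℝ) t) := uniqueDiffOn_Icc hpos
      have hgIcc : ContDiffOn ℝ ((k' + 1 : ℕ) : ℕ∞) (fun τ : ℝ => K (Fin.snoc x' (0 : ℝ) + τ • e)) (Icc 0 t) := hg.contDiffOn
      have hCbound : ∀ y ∈ Icc (0 : ℝ) t,
          ‖iteratedDerivWithin (k' + 1) (fun τ : ℝ => K (Fin.snoc x' (0 : ℝ) + τ • e)) (Icc 0 t) y‖ ≤ max C 0 := by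
        intro y hy
        rw [myIteratedDerivWithin_eq hg le_rfl hudIcc hy]
        rw [myIteratedDeriv_line hΩ hK (Fin.snoc x' 0) e (k' + 1) le_rfl y (hmemΩ y)]
        have hyS : Fin.snoc x' (0 : ℝ) + y • e ∈ S := by
          rw [hsnoc y]
          constructor
          · rw [hNsnoc y, hx's, abs_of_nonneg hy.1]
            have := hy.1; linarith
          · rw [hNsnoc y, hx's, abs_of_nonneg hy.1]
            have := hy.2; linarith
        refine le_trans (ContinuousMultilinearMap.le_opNorm _ _) ?_
        rw [Finset.prod_const, henorm, one_pow, mul_one]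
        exact le_trans (hC _ hyS) (le_max_left _ _)
      have htaylor := taylor_mean_remainder_bound hpos.le hgIcc
        (right_mem_Icc.mpr hpos.le) hCbound
      have hTP : taylorWithinEval (fun τ : ℝ => K (Fin.snoc x' (0 : ℝ) + τ • e)) k' (Icc (0 : ℝ) t) 0 t = 0 := by
        rw [taylor_within_apply]
        apply Finset.sum_eq_zero
        intro j hj
        have hjle : j ≤ k' + 1 := by
          have := Finset.mem_range.mp hj; omega
        rw [myIteratedDerivWithin_eq hg hjle hudIcc (left_mem_Icc.mpr hpos.le),
          hzero0 j hjle, smul_zero]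
      rw [hTP, sub_zero] at htaylor
      have hgt : K (Fin.snoc x' (0 : ℝ) + t • e) = K (Fin.snoc x' t) := by rw [hsnoc t]
      rw [← hgt, htabs]
      calc |K (Fin.snoc x' (0 : ℝ) + t • e)| ≤ max C 0 * (t - 0) ^ (k' + 1) / k' ! := htaylor
        _ = max C 0 * t ^ (k' + 1) / k' ! := by ring_nf
        _ ≤ max C 0 * t ^ (k' + 1) := by
            apply div_le_self
            · positivity
            · exact_mod_cast Nat.one_le_iff_ne_zero.mpr (Nat.factorial_ne_zero k')
        _ ≤ c₂ * t ^ (k' + 1) := by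
            apply mul_le_mul_of_nonneg_right _ (by positivity)
            rw [hc₂]
            have h3 : (0:ℝ) ≤ max M 0 * 2 ^ (k' + 1) := by positivity
            linarith
    · -- large t case
      have hxS : Fin.snoc x' t ∈ S := by
        constructor
        · rw [hNsnoc t, ht1]; norm_num
        · rw [hNsnoc t, ht1]
      have h1 : |K (Fin.snoc x' t)| ≤ max M 0 := le_trans (hM _ hxS) (le_max_left _ _)
      have h2t : (1 : ℝ) ≤ 2 * t := by nlinarith
      have h2 : (1 : ℝ) ≤ (2 * t) ^ (k' + 1) := one_le_pow₀ h2t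
      rw [htabs]
      calc |K (Fin.snoc x' t)| ≤ max M 0 := h1
        _ ≤ max M 0 * (2 * t) ^ (k' + 1) := le_mul_of_one_le_right (le_max_right _ _) h2
        _ = max M 0 * 2 ^ (k' + 1) * t ^ (k' + 1) := by rw [mul_pow]; ring
        _ ≤ c₂ * t ^ (k' + 1) := by
            apply mul_le_mul_of_nonneg_right _ (by positivity)
            rw [hc₂]
            have h3 : (0:ℝ) ≤ max C 0 := le_max_right _ _
            linarith
end

section
/- (Boundary ellipticity implies the resultant operator is elliptic.) Let A be a k-th order homogeneous constant-coefficient operator from V to W with dim V = 1 (so A(ξ) ∈ W for ξ ∈ ℂⁿ), elliptic and boundary elliptic in direction eₙ, and set w₀ = A(0,…,0,1) ≠ 0. For ξ' ∈ ℝ^{n−1} and w ∈ W define P(ξ')[w] = Res(w₀·A(ξ',·), w·A(ξ',·)) (resultant in the variable ξₙ). Then for every real ξ' ≠ 0 there exists w ∈ W with P(ξ')[w] ≠ 0; i.e. the polynomial map w ↦ P(ξ')[w] is not identically zero. -/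
open Finset Polynomial

/-- boundary ellipticity implies the resultant operator is elliptic:
with `dim V = 1`, the symbol in direction `ξₙ` is a vector `A(ξ', ·)` of real polynomials
of degree ≤ k with leading coefficient vector `w₀ = A(eₙ) ≠ 0`.  Assume ellipticity
(`A(ξ', τ) ≠ 0` for real `(ξ', τ) ≠ 0`) and boundary ellipticity in direction `eₙ`
(`A(ξ', τ) ≠ 0` for complex `τ` with `Im τ ≠ 0`).  Let `P(ξ')[w]` be the resultant of
`w₀·A(ξ',·)` and `w·A(ξ',·)` in the variable `ξₙ`, encoded through the vanishing
property of resultants: if `P(ξ')[w] = 0` then either `deg(w·A(ξ',·)) < k` or the two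
polynomials have a common complex root.  Then for every real `ξ' ≠ 0` there is `w` with
`P(ξ')[w] ≠ 0`. -/
theorem stmt_12 (m N k : ℕ) (hk : 1 ≤ k)
    (A : (Fin m → ℝ) → Fin N → Polynomial ℝ)
    (hdeg : ∀ (ξ' : Fin m → ℝ) (j : Fin N), (A ξ' j).natDegree ≤ k)
    (w₀ : Fin N → ℝ) (hw₀ : w₀ ≠ 0)
    (hlead : ∀ (ξ' : Fin m → ℝ) (j : Fin N), (A ξ' j).coeff k = w₀ j)
    (hell : ∀ (ξ' : Fin m → ℝ) (τ : ℝ), ξ' ≠ 0 →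
      ∃ j, Polynomial.eval τ (A ξ' j) ≠ 0)
    (hbell : ∀ (ξ' : Fin m → ℝ) (τ : ℂ), τ.im ≠ 0 →
      ∃ j, Polynomial.aeval τ (A ξ' j) ≠ 0)
    (P : (Fin m → ℝ) → (Fin N → ℝ) → ℝ)
    (hres : ∀ (ξ' : Fin m → ℝ) (w : Fin N → ℝ), P ξ' w = 0 →
      ((∑ j, Polynomial.C (w j) * A ξ' j).natDegree < k) ∨
      ∃ τ : ℂ, Polynomial.aeval τ (∑ j, Polynomial.C (w₀ j) * A ξ' j) = 0 ∧
        Polynomial.aeval τ (∑ j, Polynomial.C (w j) * A ξ' j) = 0) :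
    ∀ ξ' : Fin m → ℝ, ξ' ≠ 0 → ∃ w : Fin N → ℝ, P ξ' w ≠ 0 := by
  intro ξ' hξ'
  by_contra hcon
  push_neg at hcon
  -- notation
  set Q : (Fin N → ℝ) → Polynomial ℝ := fun w => ∑ j, Polynomial.C (w j) * A ξ' j with hQ
  -- coefficient k of Q w
  have hcoeffk : ∀ w : Fin N → ℝ, (Q w).coeff k = ∑ j, w j * w₀ j := by
    intro w
    simp [hQ, Polynomial.finset_sum_coeff, Polynomial.coeff_C_mul, hlead]
  -- w₀ pairing with itself is nonzero
  have hpair : (∑ j, w₀ j * w₀ j) ≠ 0 := by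
    intro h
    apply hw₀
    funext j
    have hnn : ∀ i ∈ Finset.univ, 0 ≤ w₀ i * w₀ i := fun i _ => mul_self_nonneg _
    have := (Finset.sum_eq_zero_iff_of_nonneg hnn).mp h j (Finset.mem_univ j)
    have := mul_self_eq_zero.mp this
    simpa using this
  -- complexified Q w₀ is nonzero
  set Q₀ : Polynomial ℂ := (Q w₀).map (algebraMap ℝ ℂ) with hQ₀
  have hQ₀ne : Q₀ ≠ 0 := by
    intro h
    have : Q₀.coeff k = 0 := by rw [h]; simp
    rw [hQ₀, Polynomial.coeff_map, hcoeffk] at this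
    exact hpair (by exact_mod_cast (by simpa using this : ∑ x : Fin N, ((w₀ x : ℂ)) * (w₀ x : ℂ) = 0))
  -- aeval of Q w
  have haevalQ : ∀ (τ : ℂ) (w : Fin N → ℝ),
      Polynomial.aeval τ (Q w) = ∑ j, (w j : ℂ) * Polynomial.aeval τ (A ξ' j) := by
    intro τ w
    simp [hQ, map_sum]
  -- linear functionals
  let L : ℂ → ((Fin N → ℝ) →ₗ[ℝ] ℂ) := fun τ =>
    { toFun := fun w => ∑ j, (w j : ℂ) * Polynomial.aeval τ (A ξ' j)
      map_add' := by intro x y; simp [add_mul, Finset.sum_add_distrib]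
      map_smul' := by intro c x; simp [mul_assoc, Finset.mul_sum]
    }
  let L0 : (Fin N → ℝ) →ₗ[ℝ] ℝ :=
    { toFun := fun w => ∑ j, w j * w₀ j
      map_add' := by intro x y; simp [add_mul, Finset.sum_add_distrib]
      map_smul' := by intro c x; simp [mul_assoc, Finset.mul_sum]
    }
  -- index set : roots of Q₀ plus one extra index
  let S := Q₀.roots.toFinset
  let p : Option {τ // τ ∈ S} → Subspace ℝ (Fin N → ℝ) := fun o =>
    match o with
    | none => LinearMap.ker L0
    | some τ => LinearMap.ker (L τ.1)
  have hcover : ⋃ i, (p i : Set (Fin N → ℝ)) = Set.univ := by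
    apply Set.eq_univ_of_forall
    intro w
    rcases hres ξ' w (hcon w) with hlt | ⟨τ, hτ₀, hτw⟩
    · refine Set.mem_iUnion.mpr ⟨none, ?_⟩
      have : (Q w).coeff k = 0 := Polynomial.coeff_eq_zero_of_natDegree_lt hlt
      rw [hcoeffk] at this
      simpa [p, L0, LinearMap.mem_ker] using this
    · have hτS : τ ∈ S := by
        rw [Multiset.mem_toFinset, Polynomial.mem_roots hQ₀ne]
        rw [Polynomial.IsRoot, Polynomial.eval_map, ← Polynomial.aeval_def]
        exact hτ₀
      refine Set.mem_iUnion.mpr ⟨some ⟨τ, hτS⟩, ?_⟩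
      have := hτw
      rw [show (∑ j, Polynomial.C (w j) * A ξ' j) = Q w from rfl, haevalQ] at this
      simpa [p, L, LinearMap.mem_ker] using this
  obtain ⟨i, hi⟩ := Subspace.exists_eq_top_of_iUnion_eq_univ hcover
  match i with
  | none =>
    have : w₀ ∈ LinearMap.ker L0 := by rw [show LinearMap.ker L0 = p none from rfl, hi]; trivial
    rw [LinearMap.mem_ker] at this
    exact hpair this
  | some ⟨τ, hτS⟩ =>
    have hmem : ∀ w, w ∈ LinearMap.ker (L τ) := by
      intro w
      rw [show LinearMap.ker (L τ) = p (some ⟨τ, hτS⟩) from rfl, hi]; trivial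
    have hkill : ∀ j, Polynomial.aeval τ (A ξ' j) = 0 := by
      intro j
      have := hmem (Pi.single j 1)
      rw [LinearMap.mem_ker] at this
      simpa [L, Pi.single_apply, apply_ite (fun r : ℝ => (r : ℂ)), ite_mul,
        Finset.sum_ite_eq'] using this
    by_cases him : τ.im = 0
    · obtain ⟨j, hj⟩ := hell ξ' τ.re hξ'
      apply hj
      have h1 : τ = (τ.re : ℂ) := by
        apply Complex.ext <;> simp [him]
      have := hkill j
      rw [h1, show ((τ.re : ℂ)) = algebraMap ℝ ℂ τ.re from rfl,
        Polynomial.aeval_algebraMap_apply] at this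
      rw [show ((Polynomial.aeval τ.re : Polynomial ℝ → ℝ) = Polynomial.eval τ.re) from
        Polynomial.coe_aeval_eq_eval τ.re] at this
      rw [show (algebraMap ℝ ℂ) = (Complex.ofReal : ℝ → ℂ) from rfl,
        Complex.ofReal_eq_zero] at this
      exact this
    · obtain ⟨j, hj⟩ := hbell ξ' τ him
      exact hj (hkill j)
end

section
/- (Boundary ellipticity implies cancellation in the 2D first-order case, via the cited equivalence.) Let n ≥ 2 and let A be a k-th order homogeneous operator that is elliptic (ker_ℝ A(ξ) = {0} for ξ ∈ ℝⁿ \ {0}) and boundary elliptic in direction e₁. Define A₁ as the restriction of the symbol to span{e₁,e₂} ≅ ℝ². Then A₁ is ℂ-elliptic on ℝ²: ker_ℂ A₁(ζ) = {0} for all ζ ∈ ℂ² \ {0}. -/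
/-- if the k-homogeneous complexified symbol `A` is elliptic
(`ker_ℂ A(ξ) = {0}` for real `ξ ≠ 0`) and boundary elliptic in direction `e₁`
(`ker_ℂ A(ξ + ie₁) = {0}` for all real `ξ`), then the restriction `A₁` of the symbol to
`span{e₁, e₂} ≅ ℝ²` is ℂ-elliptic: `ker_ℂ A₁(ζ) = {0}` for all `ζ ∈ ℂ² \ {0}`. -/
theorem stmt_14 (n k : ℕ) (hn : 2 ≤ n) (V W : Type*) [AddCommGroup V] [Module ℂ V]
    [AddCommGroup W] [Module ℂ W]
    (A : (Fin n → ℂ) → (V →ₗ[ℂ] W))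
    (hhom : ∀ (l : ℂ) (ζ : Fin n → ℂ), A (l • ζ) = l ^ k • A ζ)
    (hell : ∀ ξ : Fin n → ℝ, ξ ≠ 0 →
      LinearMap.ker (A fun i => (ξ i : ℂ)) = ⊥)
    (hbe : ∀ ξ : Fin n → ℝ,
      LinearMap.ker (A fun i =>
        (ξ i : ℂ) + Complex.I * (if (i : ℕ) = 0 then 1 else 0)) = ⊥) :
    ∀ ζ : Fin 2 → ℂ, ζ ≠ 0 →
      LinearMap.ker (A fun i : Fin n =>
        if (i : ℕ) = 0 then ζ 0 else if (i : ℕ) = 1 then ζ 1 else 0) = ⊥ := by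
  intro ζ hζ
  have h0ne : (ζ 0 ≠ 0) ∨ (ζ 1 ≠ 0) := by
    by_contra h
    push_neg at h
    exact hζ (funext fun i => by fin_cases i <;> simp [h.1, h.2])
  set z : Fin n → ℂ := fun i : Fin n =>
    if (i : ℕ) = 0 then ζ 0 else if (i : ℕ) = 1 then ζ 1 else 0 with hzdef
  have key : ∀ l : ℂ, l ≠ 0 → LinearMap.ker (A (l • z)) = ⊥ →
      LinearMap.ker (A z) = ⊥ := fun l hl h => by
    rwa [hhom, LinearMap.ker_smul _ _ (pow_ne_zero k hl)] at h
  by_cases hD : (ζ 1).re * (ζ 0).im - (ζ 1).im * (ζ 0).re = 0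
  · -- dependent case: a nonzero complex multiple of ζ is real; use hell
    obtain ⟨l, hl, him0, him1, hre⟩ :
        ∃ l : ℂ, l ≠ 0 ∧ (l * ζ 0).im = 0 ∧ (l * ζ 1).im = 0 ∧
          ((l * ζ 0).re ≠ 0 ∨ (l * ζ 1).re ≠ 0) := by
      by_cases h1 : ζ 1 = 0
      · have h0 : ζ 0 ≠ 0 := h0ne.resolve_right (by simp [h1])
        refine ⟨(⟨(ζ 0).re, -(ζ 0).im⟩ : ℂ), ?_, ?_, ?_, Or.inl ?_⟩
        · intro h
          apply h0
          rw [Complex.ext_iff] at h ⊢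
          simp at h ⊢
          exact ⟨h.1, by simpa using h.2⟩
        · simp [Complex.mul_im]; ring
        · simp [h1]
        · have := Complex.normSq_pos.mpr h0
          simp [Complex.mul_re]; nlinarith [this, Complex.normSq_apply (ζ 0)]
      · refine ⟨(⟨(ζ 1).re, -(ζ 1).im⟩ : ℂ), ?_, ?_, ?_, Or.inr ?_⟩
        · intro h
          apply h1
          rw [Complex.ext_iff] at h ⊢
          simp at h ⊢
          exact ⟨h.1, by simpa using h.2⟩
        · simp [Complex.mul_im]; linarith
        · simp [Complex.mul_im]; ring
        · have := Complex.normSq_pos.mpr h1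
          simp [Complex.mul_re]; nlinarith [this, Complex.normSq_apply (ζ 1)]
    apply key l hl
    set ξ : Fin n → ℝ := fun i => (l * z i).re with hξdef
    have hzeq : l • z = fun i => ((ξ i : ℝ) : ℂ) := by
      funext i
      by_cases hi0 : (i : ℕ) = 0
      · simp [hzdef, hξdef, hi0, Complex.ext_iff, him0]
      by_cases hi1 : (i : ℕ) = 1
      · simp [hzdef, hξdef, hi0, hi1, Complex.ext_iff, him1]
      · simp [hzdef, hξdef, hi0, hi1]
    rw [hzeq]
    apply hell
    intro hξ0
    rcases hre with h | h
    · exact h (by simpa [hξdef, hzdef] using congrFun hξ0 ⟨0, by omega⟩)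
    · exact h (by simpa [hξdef, hzdef] using congrFun hξ0 ⟨1, by omega⟩)
  · -- independent case: find l with lζ = ξ + i e₁; use hbe
    set D := (ζ 1).re * (ζ 0).im - (ζ 1).im * (ζ 0).re with hDdef
    set l : ℂ := (⟨(ζ 1).re / D, -(ζ 1).im / D⟩ : ℂ) with hldef
    have hl : l ≠ 0 := by
      intro h
      rw [Complex.ext_iff] at h
      simp [hldef, div_eq_zero_iff, hD, neg_eq_zero] at h
      apply hD
      simp [hDdef, h.1, h.2]
    have him0 : (l * ζ 0).im = 1 := by
      simp [hldef, Complex.mul_im]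
      field_simp
      ring
    have him1 : (l * ζ 1).im = 0 := by
      simp [hldef, Complex.mul_im]
      ring
    apply key l hl
    set ξ : Fin n → ℝ := fun i => (l * z i).re with hξdef
    have hzeq : l • z = fun i =>
        ((ξ i : ℝ) : ℂ) + Complex.I * (if (i : ℕ) = 0 then 1 else 0) := by
      funext i
      by_cases hi0 : (i : ℕ) = 0
      · simp [hzdef, hξdef, hi0, Complex.ext_iff, him0]
      by_cases hi1 : (i : ℕ) = 1
      · simp [hzdef, hξdef, hi0, hi1, Complex.ext_iff, him1]
      · simp [hzdef, hξdef, hi0, hi1]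
    rw [hzeq]
    exact hbe ξ
end

section
/- (Trace-free symmetric gradient has nontrivial kernel with singular boundary trace in 2D.) Define f : ℝ² \ {0} → ℝ² by f(x₁, x₂) = ( x₁/(x₁²+x₂²), −x₂/(x₁²+x₂²) ). Then the deviatoric symmetric gradient ε^D(f) := ½(Df + Df^T) − ½ div(f) · Id_{2×2} vanishes identically on ℝ² \ {0}. Moreover, for any line L through the origin, ∫_L |f| dH¹ = ∞. -/
set_option maxHeartbeats 1000000


open MeasureTheory Set

lemma aux_lintegral_inv_top (k : ℝ) (hk : 0 < k) :
    ∫⁻ t in Ioi (0:ℝ), ENNReal.ofReal (k * t⁻¹) = ⊤ := by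
  by_contra h
  have hlt : ∫⁻ t in Ioi (0:ℝ), ENNReal.ofReal (k * t⁻¹) < ⊤ := lt_top_iff_ne_top.2 h
  have hint : IntegrableOn (fun t : ℝ => k * t⁻¹) (Ioi 0) := by
    refine ⟨(measurable_const.mul measurable_inv).aestronglyMeasurable, ?_⟩
    rw [hasFiniteIntegral_iff_ofReal ?_]
    · exact hlt
    · filter_upwards [ae_restrict_mem measurableSet_Ioi] with t ht
      exact mul_nonneg hk.le (inv_nonneg.2 (le_of_lt ht))
  have : IntegrableOn (fun t : ℝ => t⁻¹) (Ioi 0) := by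
    have := hint.const_mul k⁻¹
    have h' : Integrable (fun x : ℝ => x⁻¹) (volume.restrict (Ioi 0)) := by
      simpa [← mul_assoc, inv_mul_cancel₀ hk.ne'] using this
    exact h'
  exact not_IntegrableOn_Ioi_inv this

/-- for `f(x₁,x₂) = (x₁/(x₁²+x₂²), −x₂/(x₁²+x₂²))` on `ℝ² \ {0}`, the
deviatoric symmetric gradient `ε^D(f) = ½(Df + Dfᵀ) − ½ div(f)·Id` vanishes identically
(equivalently `∂₁f₁ = ∂₂f₂` and `∂₁f₂ + ∂₂f₁ = 0`), and for every line through the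
origin `∫_L |f| dH¹ = ∞`. -/
theorem stmt_17 (f : ℝ × ℝ → ℝ × ℝ)
    (hf : f = fun x => if x = 0 then 0 else
      (x.1 / (x.1 ^ 2 + x.2 ^ 2), -x.2 / (x.1 ^ 2 + x.2 ^ 2))) :
    (∀ x : ℝ × ℝ, x ≠ 0 →
      (fderiv ℝ f x (1, 0)).1 = (fderiv ℝ f x (0, 1)).2 ∧
      (fderiv ℝ f x (1, 0)).2 + (fderiv ℝ f x (0, 1)).1 = 0) ∧
    ∀ ν : ℝ × ℝ, ν ≠ 0 → ∫⁻ t : ℝ, ENNReal.ofReal ‖f (t • ν)‖ = ⊤ := by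
  constructor
  · intro x hx
    have hr : x.1 ^ 2 + x.2 ^ 2 ≠ 0 := by
      intro h
      apply hx
      have h1 : x.1 = 0 := by nlinarith [sq_nonneg x.1, sq_nonneg x.2]
      have h2 : x.2 = 0 := by nlinarith [sq_nonneg x.1, sq_nonneg x.2]
      exact Prod.ext h1 h2
    have hr' : x.1 * x.1 + x.2 * x.2 ≠ 0 := by
      intro h; apply hr; nlinarith [h]
    have hA : HasFDerivAt (fun y : ℝ × ℝ => y.1 * y.1 + y.2 * y.2)
        ((x.1 • (ContinuousLinearMap.fst ℝ ℝ ℝ) + x.1 • (ContinuousLinearMap.fst ℝ ℝ ℝ)) +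
         (x.2 • (ContinuousLinearMap.snd ℝ ℝ ℝ) + x.2 • (ContinuousLinearMap.snd ℝ ℝ ℝ))) x :=
      ((hasFDerivAt_fst (p := x)).mul (hasFDerivAt_fst (p := x))).add
        ((hasFDerivAt_snd (p := x)).mul (hasFDerivAt_snd (p := x)))
    have hinv := (hasDerivAt_inv hr').comp_hasFDerivAt x hA
    have h1 := (hasFDerivAt_fst (p := x)).mul hinv
    have h2 := ((hasFDerivAt_snd (p := x)).neg).mul hinv
    have hg := HasFDerivAt.prodMk h1 h2
    have heq : f =ᶠ[nhds x] (fun y : ℝ × ℝ =>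
        (y.1 * (y.1 * y.1 + y.2 * y.2)⁻¹, -y.2 * (y.1 * y.1 + y.2 * y.2)⁻¹)) := by
      have hmem : {y : ℝ × ℝ | y ≠ 0} ∈ nhds x := isOpen_compl_singleton.mem_nhds hx
      filter_upwards [hmem] with y hy
      simp [hf, hy, div_eq_mul_inv, pow_two]
    have hF := hg.congr_of_eventuallyEq heq
    rw [hF.fderiv]
    constructor
    · simp only [ContinuousLinearMap.prod_apply]
      simp [ContinuousLinearMap.smul_apply, ContinuousLinearMap.sub_apply,
        ContinuousLinearMap.add_apply]
      field_simp
      ring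
    · simp only [ContinuousLinearMap.prod_apply]
      simp [ContinuousLinearMap.smul_apply, ContinuousLinearMap.sub_apply,
        ContinuousLinearMap.add_apply]
      field_simp
      ring
  · intro ν hν
    have hq : 0 < ν.1 ^ 2 + ν.2 ^ 2 := by
      by_contra h
      push_neg at h
      have h1 : ν.1 = 0 := by nlinarith [sq_nonneg ν.1, sq_nonneg ν.2]
      have h2 : ν.2 = 0 := by nlinarith [sq_nonneg ν.1, sq_nonneg ν.2]
      exact hν (Prod.ext h1 h2)
    set q : ℝ := ν.1 ^ 2 + ν.2 ^ 2 with hqdef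
    set c : ℝ := max |ν.1| |ν.2| with hcdef
    have hc : 0 < c := by
      by_contra hcn
      push_neg at hcn
      have h1 : |ν.1| ≤ 0 := le_trans (le_max_left _ _) hcn
      have h2 : |ν.2| ≤ 0 := le_trans (le_max_right _ _) hcn
      exact hν (Prod.ext (abs_nonpos_iff.1 h1) (abs_nonpos_iff.1 h2))
    have hmf : Measurable f := by
      rw [hf]
      exact Measurable.ite (measurableSet_singleton 0) measurable_const
        ((measurable_fst.div ((measurable_fst.pow_const 2).add
          (measurable_snd.pow_const 2))).prod
         ((measurable_snd.neg).div ((measurable_fst.pow_const 2).add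
          (measurable_snd.pow_const 2))))
    have hmeas : Measurable fun t : ℝ => ENNReal.ofReal ‖f (t • ν)‖ :=
      ((hmf.comp (measurable_id.smul measurable_const)).norm).ennreal_ofReal
    have hbound : ∀ t ∈ Ioi (0:ℝ),
        ENNReal.ofReal ((c / q) * t⁻¹) ≤ ENNReal.ofReal ‖f (t • ν)‖ := by
      intro t ht
      have ht' : (0:ℝ) < t := ht
      have hne : t • ν ≠ 0 := smul_ne_zero ht'.ne' hν
      apply ENNReal.ofReal_le_ofReal
      have hval : f (t • ν) = (t * ν.1 / (t ^ 2 * q), -(t * ν.2) / (t ^ 2 * q)) := by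
        simp only [hf, if_neg hne, Prod.smul_fst, Prod.smul_snd, smul_eq_mul]
        rw [hqdef]
        ring_nf
      rw [hval]
      rcases max_cases |ν.1| |ν.2| with ⟨hce, _⟩ | ⟨hce, _⟩
      · calc c / q * t⁻¹ = |t * ν.1 / (t ^ 2 * q)| := by
              rw [hcdef, hce, abs_div, abs_mul, abs_of_pos ht', abs_of_pos (by positivity : (0:ℝ) < t ^ 2 * q)]
              field_simp
          _ ≤ ‖(t * ν.1 / (t ^ 2 * q), -(t * ν.2) / (t ^ 2 * q))‖ := by
              rw [← Real.norm_eq_abs]; exact norm_fst_le (t * ν.1 / (t ^ 2 * q), -(t * ν.2) / (t ^ 2 * q))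
      · calc c / q * t⁻¹ = |-(t * ν.2) / (t ^ 2 * q)| := by
              rw [hcdef, hce, abs_div, abs_neg, abs_mul, abs_of_pos ht', abs_of_pos (by positivity : (0:ℝ) < t ^ 2 * q)]
              field_simp
          _ ≤ ‖(t * ν.1 / (t ^ 2 * q), -(t * ν.2) / (t ^ 2 * q))‖ := by
              rw [← Real.norm_eq_abs]; exact norm_snd_le (t * ν.1 / (t ^ 2 * q), -(t * ν.2) / (t ^ 2 * q))
    have htop : ∫⁻ t in Ioi (0:ℝ), ENNReal.ofReal ‖f (t • ν)‖ = ⊤ := by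
      rw [eq_top_iff, ← aux_lintegral_inv_top (c / q) (by positivity)]
      exact setLIntegral_mono hmeas hbound
    rw [eq_top_iff, ← htop]
    exact setLIntegral_le_lintegral _ _
end

section
/- (No linear continuous right inverse for the full trace.) Let k ≥ 2 and suppose E : T_k(ℝ^{n−1}) → Ẇ^{k,1}(ℝⁿ₊) is a bounded linear map with tr_k ∘ E = id, where tr_k u = (u, ∂ₙu, …, ∂ₙ^{k−1}u)|_{ℝ^{n−1}} and T_k(ℝ^{n−1}) = Ḃ^{k−1}_{1,1} × ⋯ × Ḃ^{1}_{1,1} × L¹. Then the map L¹(ℝ^{n−1}) → Ẇ^{1,1}(ℝⁿ₊), f ↦ ∂ₙ^{k−1} E(0,…,0,f), is a bounded linear right inverse of the Gagliardo trace operator tr : Ẇ^{1,1}(ℝⁿ₊) → L¹(ℝ^{n−1}). Combined with Peetre's theorem (no such bounded linear right inverse exists), tr_k admits no bounded linear right inverse. -/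
/-- no linear continuous right inverse for the full trace: abstractly,
let `Wk` play the role of `Ẇ^{k,1}(ℝⁿ₊)`, `W1` of `Ẇ^{1,1}(ℝⁿ₊)`, `L1` of
`L¹(ℝ^{n−1})`, and `TB × L1` of the trace space
`T_k = Ḃ^{k−1}_{1,1} × ⋯ × Ḃ^1_{1,1} × L¹` (with `TB` collecting the Besov components).
Let `trk : Wk → TB × L1` be the full trace, `dk : Wk → W1` the bounded map
`u ↦ ∂ₙ^{k−1}u`, and `tr : W1 → L1` Gagliardo's trace, with the compatibility
`(trk u).2 = tr(∂ₙ^{k−1}u)`.  Then any bounded linear right inverse `E` of `trk` yields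
the bounded linear right inverse `f ↦ ∂ₙ^{k−1}E(0,f)` of `tr`; combined with Peetre's
theorem (no such right inverse of `tr` exists), `trk` admits no bounded linear right
inverse. -/
theorem stmt_19 (TB L1 Wk W1 : Type*)
    [NormedAddCommGroup TB] [NormedSpace ℝ TB]
    [NormedAddCommGroup L1] [NormedSpace ℝ L1]
    [NormedAddCommGroup Wk] [NormedSpace ℝ Wk]
    [NormedAddCommGroup W1] [NormedSpace ℝ W1]
    (trk : Wk →L[ℝ] TB × L1) (dk : Wk →L[ℝ] W1) (tr : W1 →L[ℝ] L1)
    (hcompat : ∀ u : Wk, (trk u).2 = tr (dk u))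
    (hPeetre : ¬ ∃ G : L1 →L[ℝ] W1, ∀ f : L1, tr (G f) = f) :
    (∀ E : TB × L1 →L[ℝ] Wk, (∀ t, trk (E t) = t) →
      ∀ f : L1, tr (dk (E (0, f))) = f) ∧
    ¬ ∃ E : TB × L1 →L[ℝ] Wk, ∀ t, trk (E t) = t := by
  have key : ∀ E : TB × L1 →L[ℝ] Wk, (∀ t, trk (E t) = t) →
      ∀ f : L1, tr (dk (E (0, f))) = f := by
    intro E hE f
    have := hcompat (E (0, f))
    rw [hE (0, f)] at this
    exact this.symm
  refine ⟨key, ?_⟩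
  rintro ⟨E, hE⟩
  exact hPeetre ⟨(dk.comp E).comp (ContinuousLinearMap.inr ℝ TB L1),
    fun f => key E hE f⟩
end
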